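/- Maximum principle for the fractional Laplacian: let Ω ⊂ ℝ^N be open and bounded and let O ⊆ ℝ^N be open with closure(Ω) ⊂ O. Let u : ℝ^N → ℝ be measurable with u ∈ C^{2s+ε}(Ω), u continuous on O, ∫_{ℝ^N} |u(y)|/(1+|y|^{N+2s}) dy < ∞, (−Δ)^s u(x) ≤ 0 for every x ∈ Ω, and u(x) ≤ 0 for every x ∈ ℝ^N∖Ω. Then u ≤ 0 on Ω. -/
import Mathlib

open MeasureTheory Filter

/-- The normalizing constant `C_{N,s} = 4^s·Γ(N/2+s)·s/(π^{N/2}·Γ(1−s))`. -/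
noncomputable def CNs (N : ℕ) (s : ℝ) : ℝ :=
  (4 : ℝ) ^ s * Real.Gamma ((N : ℝ) / 2 + s) * s /
    (Real.pi ^ ((N : ℝ) / 2) * Real.Gamma (1 - s))

/-- `(−Δ)^s u (x) = L`, in the principal value sense. -/
def HasFracLap (N : ℕ) (s : ℝ) (u : EuclideanSpace ℝ (Fin N) → ℝ)
    (x : EuclideanSpace ℝ (Fin N)) (L : ℝ) : Prop :=
  Tendsto
    (fun ε : ℝ =>
      CNs N s * ∫ y in (Metric.ball x ε)ᶜ, (u x - u y) / ‖x - y‖ ^ ((N : ℝ) + 2 * s))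
    (nhdsWithin 0 (Set.Ioi 0)) (nhds L)

/-- `u ∈ C^{2s+ε}(Ω)`: `u` is continuous on `Ω` and, on each compact `K ⊂ Ω`, for some
`α > 0` with `2s+α < 2`, `u` is Hölder of exponent `2s+α` if `2s+α ≤ 1`, and differentiable
with gradient Hölder of exponent `2s+α−1` if `2s+α > 1`. -/
def MemC2sEps (N : ℕ) (s : ℝ) (Ω : Set (EuclideanSpace ℝ (Fin N)))
    (u : EuclideanSpace ℝ (Fin N) → ℝ) : Prop :=
  ContinuousOn u Ω ∧
    ∀ K : Set (EuclideanSpace ℝ (Fin N)), K ⊆ Ω → IsCompact K →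
      ∃ α : ℝ, 0 < α ∧ 2 * s + α < 2 ∧
        ((2 * s + α ≤ 1 ∧ ∃ C : NNReal, HolderOnWith C (2 * s + α).toNNReal u K) ∨
          (1 < 2 * s + α ∧ (∀ x ∈ K, DifferentiableAt ℝ u x) ∧
            ∃ C : NNReal, HolderOnWith C (2 * s + α - 1).toNNReal (fderiv ℝ u) K))

/-- Integrability of `1/(1+‖y‖^p)` on `ℝ^N` for `p > N`. -/
lemma fracmax_aux_int (N : ℕ) (p : ℝ) (hp : (N : ℝ) < p) :
    Integrable (fun y : EuclideanSpace ℝ (Fin N) => 1 / (1 + ‖y‖ ^ p)) := by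
  have hp0 : 0 < p := lt_of_le_of_lt (by positivity) hp
  have hfin : (Module.finrank ℝ (EuclideanSpace ℝ (Fin N)) : ℝ) < p := by
    simpa [finrank_euclideanSpace] using hp
  refine Integrable.mono' ((integrable_one_add_norm hfin).const_mul ((2:ℝ)^p)) ?_ ?_
  · apply Measurable.aestronglyMeasurable; fun_prop
  · filter_upwards with y
    have h1 : (0:ℝ) < 1 + ‖y‖^p := by positivity
    have h2 : (1 + ‖y‖) ^ p ≤ 2^p * (1 + ‖y‖^p) := by
      have : (1 + ‖y‖) ≤ 2 * max 1 ‖y‖ := by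
        rcases max_cases 1 ‖y‖ with ⟨h, h'⟩ | ⟨h, h'⟩ <;> rw [h] <;> linarith
      calc (1 + ‖y‖) ^ p ≤ (2 * max 1 ‖y‖) ^ p :=
            Real.rpow_le_rpow (by positivity) this hp0.le
        _ = 2^p * (max 1 ‖y‖)^p := Real.mul_rpow (by norm_num) (by positivity)
        _ ≤ 2^p * (1 + ‖y‖^p) := by
            gcongr
            rcases max_cases 1 ‖y‖ with ⟨h, h'⟩ | ⟨h, h'⟩ <;> rw [h]
            · rw [Real.one_rpow]; nlinarith [Real.rpow_nonneg (norm_nonneg y) p]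
            · nlinarith [Real.rpow_nonneg (norm_nonneg y) p]
    rw [Real.norm_eq_abs, abs_of_nonneg (by positivity), Real.rpow_neg (by positivity),
      ← div_eq_mul_inv, div_le_div_iff₀ h1 (by positivity), one_mul]
    linarith

/-- A pointwise domination of the kernel `1/‖x₀-y‖^p` away from `x₀`. -/
lemma fracmax_dom (N : ℕ) (p : ℝ) (hp0 : 0 < p) (x₀ : EuclideanSpace ℝ (Fin N))
    {ε : ℝ} (hε : 0 < ε) :
    ∃ C : ℝ, 0 < C ∧ ∀ y : EuclideanSpace ℝ (Fin N), ε ≤ ‖x₀ - y‖ →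
      1 / ‖x₀ - y‖ ^ p ≤ C / (1 + ‖y‖ ^ p) := by
  refine ⟨2 * ((1 + ‖x₀‖) / ε + 1) ^ p, by positivity, fun y hy => ?_⟩
  have ht0 : 0 < ‖x₀ - y‖ := lt_of_lt_of_le hε hy
  have h1 : 1 + ‖y‖ ≤ ((1 + ‖x₀‖) / ε + 1) * ‖x₀ - y‖ := by
    have hxy : ‖y‖ - ‖x₀‖ ≤ ‖x₀ - y‖ := by
      simpa [norm_sub_rev x₀ y] using norm_sub_norm_le y x₀
    have hε' : 1 + ‖x₀‖ ≤ ((1 + ‖x₀‖) / ε) * ‖x₀ - y‖ := by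
      rw [div_mul_eq_mul_div, le_div_iff₀ hε]
      nlinarith [norm_nonneg x₀]
    have hring : ((1 + ‖x₀‖) / ε + 1) * ‖x₀ - y‖
        = ((1 + ‖x₀‖) / ε) * ‖x₀ - y‖ + ‖x₀ - y‖ := by ring
    linarith
  have h2 : (1 + ‖y‖) ^ p ≤ ((1 + ‖x₀‖) / ε + 1) ^ p * ‖x₀ - y‖ ^ p := by
    rw [← Real.mul_rpow (by positivity) ht0.le]
    exact Real.rpow_le_rpow (by positivity) h1 hp0.le
  have ha : (1:ℝ) ≤ (1 + ‖y‖) ^ p := by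
    have h := Real.rpow_le_rpow zero_le_one
      (by linarith [norm_nonneg y] : (1:ℝ) ≤ 1 + ‖y‖) hp0.le
    rwa [Real.one_rpow] at h
  have hb : ‖y‖ ^ p ≤ (1 + ‖y‖) ^ p :=
    Real.rpow_le_rpow (norm_nonneg y) (by linarith) hp0.le
  rw [div_le_div_iff₀ (by positivity) (by positivity), one_mul]
  nlinarith

/-- **Maximum principle for the fractional Laplacian**: let `Ω` be open and bounded, `O` open
with `closure Ω ⊆ O`, and let `u` be measurable, in `C^{2s+ε}(Ω)`, continuous on `O`, with
`∫ |u(y)|/(1+|y|^{N+2s}) dy < ∞`, `(−Δ)^s u ≤ 0` on `Ω` and `u ≤ 0` outside `Ω`.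
Then `u ≤ 0` on `Ω`. -/
theorem fractional_maximum_principle (N : ℕ) (hN : 2 ≤ N) (s : ℝ)
    (hs : s ∈ Set.Ioo (0 : ℝ) 1)
    (Ω O : Set (EuclideanSpace ℝ (Fin N)))
    (hΩo : IsOpen Ω) (hΩb : Bornology.IsBounded Ω)
    (hOo : IsOpen O) (hΩO : closure Ω ⊆ O)
    (u : EuclideanSpace ℝ (Fin N) → ℝ) (hmeas : Measurable u)
    (huC : MemC2sEps N s Ω u) (huO : ContinuousOn u O)
    (hint : Integrable (fun y => |u y| / (1 + ‖y‖ ^ ((N : ℝ) + 2 * s))))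
    (hlap : ∀ x ∈ Ω, ∃ L : ℝ, L ≤ 0 ∧ HasFracLap N s u x L)
    (hext : ∀ x, x ∉ Ω → u x ≤ 0) :
    ∀ x ∈ Ω, u x ≤ 0 := by
  intro x hx
  by_contra hux
  push_neg at hux
  obtain ⟨hs0, hs1⟩ := hs
  set p : ℝ := (N : ℝ) + 2 * s with hpdef
  have hp0 : 0 < p := by positivity
  have hNp : (N : ℝ) < p := by rw [hpdef]; linarith
  -- maximum point
  have hKc : IsCompact (closure Ω) := hΩb.isCompact_closure
  have hcont : ContinuousOn u (closure Ω) := huO.mono hΩO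
  obtain ⟨x₀, hx₀K, hmax⟩ := hKc.exists_isMaxOn ⟨x, subset_closure hx⟩ hcont
  have hM : 0 < u x₀ := lt_of_lt_of_le hux (hmax (subset_closure hx))
  have hx₀Ω : x₀ ∈ Ω := by
    by_contra h
    linarith [hext x₀ h]
  have hle : ∀ y, u y ≤ u x₀ := by
    intro y
    by_cases hy : y ∈ closure Ω
    · exact hmax hy
    · exact le_trans (hext y fun h => hy (subset_closure h)) hM.le
  -- radius R with Ω ⊆ ball x₀ R
  obtain ⟨r, hr⟩ := hΩb.subset_closedBall x₀
  set R : ℝ := max r 0 + 1 with hRdef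
  have hR0 : 0 < R := by positivity
  have hΩR : Ω ⊆ Metric.ball x₀ R := by
    intro z hz
    have := Metric.mem_closedBall.1 (hr hz)
    have hrR : r < R := by rw [hRdef]; nlinarith [le_max_left r 0]
    exact Metric.mem_ball.2 (lt_of_le_of_lt this hrR)
  set f : EuclideanSpace ℝ (Fin N) → ℝ := fun y => (u x₀ - u y) / ‖x₀ - y‖ ^ p with hfdef
  have hf0 : ∀ y, 0 ≤ f y := fun y =>
    div_nonneg (sub_nonneg.2 (hle y)) (Real.rpow_nonneg (norm_nonneg _) _)
  -- integrability on complements of balls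
  have hInt : ∀ ε : ℝ, 0 < ε → IntegrableOn f (Metric.ball x₀ ε)ᶜ := by
    intro ε hε
    obtain ⟨C, hC, hCle⟩ := fracmax_dom N p hp0 x₀ hε
    have hmeasb : MeasurableSet (Metric.ball x₀ ε)ᶜ := measurableSet_ball.compl
    have hdom : Integrable (fun y : EuclideanSpace ℝ (Fin N) =>
        (|u x₀| + |u y|) * (C / (1 + ‖y‖ ^ p))) := by
      have h1 : Integrable (fun y : EuclideanSpace ℝ (Fin N) =>
          |u x₀| * (C * (1 / (1 + ‖y‖ ^ p)))) :=
        (((fracmax_aux_int N p hNp).const_mul C).const_mul _)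
      have h2 : Integrable (fun y : EuclideanSpace ℝ (Fin N) =>
          C * (|u y| / (1 + ‖y‖ ^ p))) := hint.const_mul C
      have := h1.add h2
      refine this.congr (Filter.Eventually.of_forall fun y => ?_)
      simp only [Pi.add_apply]
      ring
    refine Integrable.mono' hdom.restrict ?_ ?_
    · apply Measurable.aestronglyMeasurable
      rw [hfdef]; fun_prop
    · rw [ae_restrict_iff' hmeasb]
      filter_upwards with y hy
      have hty : ε ≤ ‖x₀ - y‖ := by
        have : ¬ dist y x₀ < ε := fun h => hy (Metric.mem_ball.2 h)
        rw [dist_eq_norm, norm_sub_rev] at this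
        linarith [not_lt.1 this]
      have hDpos : (0:ℝ) < ‖x₀ - y‖ ^ p := Real.rpow_pos_of_pos (lt_of_lt_of_le hε hty) p
      rw [Real.norm_eq_abs, hfdef]
      calc |(u x₀ - u y) / ‖x₀ - y‖ ^ p| = |u x₀ - u y| / ‖x₀ - y‖ ^ p := by
            rw [abs_div, abs_of_nonneg hDpos.le]
        _ ≤ (|u x₀| + |u y|) * (1 / ‖x₀ - y‖ ^ p) := by
            rw [mul_one_div]
            gcongr
            exact abs_sub _ _
        _ ≤ (|u x₀| + |u y|) * (C / (1 + ‖y‖ ^ p)) :=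
            mul_le_mul_of_nonneg_left (hCle y hty) (by positivity)
  -- positivity of the integral over the complement of the big ball
  have hCNs : 0 < CNs N s := by
    have h1 : 0 < Real.Gamma ((N : ℝ) / 2 + s) := Real.Gamma_pos_of_pos (by positivity)
    have h2 : 0 < Real.Gamma (1 - s) := Real.Gamma_pos_of_pos (by linarith)
    have h3 : 0 < Real.pi ^ ((N : ℝ) / 2) := Real.rpow_pos_of_pos Real.pi_pos _
    have h4 : 0 < (4:ℝ) ^ s := Real.rpow_pos_of_pos (by norm_num) _
    exact div_pos (mul_pos (mul_pos h4 h1) hs0) (mul_pos h3 h2)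
  have hsubsupp : (Metric.ball x₀ R)ᶜ ⊆ Function.support f := by
    intro y hy
    have hyΩ : y ∉ Ω := fun h => hy (hΩR h)
    have hty : R ≤ ‖x₀ - y‖ := by
      have : ¬ dist y x₀ < R := fun h => hy (Metric.mem_ball.2 h)
      rw [dist_eq_norm, norm_sub_rev] at this
      linarith [not_lt.1 this]
    have hDpos : (0:ℝ) < ‖x₀ - y‖ ^ p := Real.rpow_pos_of_pos (lt_of_lt_of_le hR0 hty) p
    have : 0 < f y := by
      rw [hfdef]
      exact div_pos (by linarith [hext y hyΩ]) hDpos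
    exact ne_of_gt this
  have hposc : 0 < ∫ y in (Metric.ball x₀ R)ᶜ, f y := by
    rw [setIntegral_pos_iff_support_of_nonneg_ae
      (Filter.Eventually.of_forall fun y => hf0 y) (hInt R hR0)]
    -- find a ball inside the complement
    set v : EuclideanSpace ℝ (Fin N) := EuclideanSpace.single (⟨0, by omega⟩ : Fin N) (1:ℝ)
      with hvdef
    have hv : ‖v‖ = 1 := by rw [hvdef, EuclideanSpace.norm_single]; norm_num
    set z : EuclideanSpace ℝ (Fin N) := x₀ + (2 * R) • v with hzdef
    have hdzx : dist z x₀ = 2 * R := by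
      rw [hzdef, dist_eq_norm, add_sub_cancel_left, norm_smul, hv, mul_one, Real.norm_eq_abs,
        abs_of_pos (by linarith : (0:ℝ) < 2 * R)]
    have hball : Metric.ball z R ⊆ Function.support f ∩ (Metric.ball x₀ R)ᶜ := by
      intro w hw
      have hwz : dist w z < R := Metric.mem_ball.1 hw
      have hwx : R < dist w x₀ := by
        have htri := dist_triangle z w x₀
        rw [dist_comm z w, hdzx] at htri
        linarith
      have hwc : w ∈ (Metric.ball x₀ R)ᶜ := fun h => by
        have := Metric.mem_ball.1 h; linarith
      exact ⟨hsubsupp hwc, hwc⟩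
    calc (0:ENNReal) < volume (Metric.ball z R) := Metric.measure_ball_pos volume z hR0
      _ ≤ volume (Function.support f ∩ (Metric.ball x₀ R)ᶜ) := measure_mono hball
  -- conclude via the limit
  obtain ⟨L, hL0, hLT⟩ := hlap x₀ hx₀Ω
  have hLT' : Tendsto (fun ε : ℝ => CNs N s * ∫ y in (Metric.ball x₀ ε)ᶜ, f y)
      (nhdsWithin 0 (Set.Ioi 0)) (nhds L) := hLT
  have hev : ∀ᶠ ε in nhdsWithin (0:ℝ) (Set.Ioi 0),
      CNs N s * ∫ y in (Metric.ball x₀ R)ᶜ, f y ≤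
        CNs N s * ∫ y in (Metric.ball x₀ ε)ᶜ, f y := by
    filter_upwards [Ioc_mem_nhdsGT hR0] with ε hε
    have hsub : (Metric.ball x₀ R)ᶜ ⊆ (Metric.ball x₀ ε)ᶜ :=
      Set.compl_subset_compl.2 (Metric.ball_subset_ball hε.2)
    have := setIntegral_mono_set (hInt ε hε.1)
      (Filter.Eventually.of_forall fun y => hf0 y) hsub.eventuallyLE
    exact mul_le_mul_of_nonneg_left this hCNs.le
  have hfin : CNs N s * ∫ y in (Metric.ball x₀ R)ᶜ, f y ≤ L := ge_of_tendsto hLT' hev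
  nlinarith [mul_pos hCNs hposc]
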